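/- arXiv:2001.11852 — 6 statements merged into one kernel-verified Lean document; each statement's English description precedes it below -/
import Mathlib

section
/- Let q ≥ 2 be an integer and (q_k) integers with 2 ≤ q_k ≤ q. Define f on digit sequences by sending x = Σ_{k≥1} (−1)^k ε_k/(q_1⋯q_k) (ε_k ∈ {0,...,q_k−1}) to f(x) = Σ_{k≥1} ε_k/(−q)^k. Then f is strictly increasing: if two digit sequences (α_k), (ε_k) satisfy Σ (−1)^k α_k/(q_1⋯q_k) < Σ (−1)^k ε_k/(q_1⋯q_k), then Σ α_k/(−q)^k < Σ ε_k/(−q)^k. -/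
/-- The denominator `q 0 * q 1 * ⋯ * q n` of the `n`-th term (0-indexed) of a Cantor series. -/
noncomputable def cden (q : ℕ → ℕ) (n : ℕ) : ℝ := ∏ i ∈ Finset.range (n + 1), (q i : ℝ)

/-- The alternating Cantor series value `Σ_{k≥1} (−1)^k ε_k/(q_1⋯q_k)` of a digit sequence. -/
noncomputable def altVal (q : ℕ → ℕ) (e : ℕ → ℕ) : ℝ :=
  ∑' k : ℕ, (-1 : ℝ) ^ (k + 1) * (e k : ℝ) / cden q k

/-- The nega-q value `Σ_{k≥1} ε_k/(−q)^k` of a digit sequence. -/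
noncomputable def negVal (q0 : ℕ) (e : ℕ → ℕ) : ℝ :=
  ∑' k : ℕ, (e k : ℝ) / (-(q0 : ℝ)) ^ (k + 1)

/-- A digit sequence is of the excluded (non-canonical) periodic type if it ends in
`(ε_m) 0 (q_{m+2}−1) 0 (q_{m+4}−1) …`. -/
def Excluded (q e : ℕ → ℕ) : Prop :=
  ∃ m, ∀ j, e (m + 2 * j + 1) = 0 ∧ e (m + 2 * j + 2) = q (m + 2 * j + 2) - 1

/-!
Both values are alternating Cantor series: `negVal q e` is `altVal` for the constant base
sequence `q`. For a fixed base sequence, the sign of the difference of two values is decided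
at the first index `n` where the digits differ: the remaining terms contribute at least
`-1 / (q_1⋯q_{n+1})`, because the tail with maximal digits `q_k - 1` telescopes to exactly
that, and the bound is attained only by the excluded tails `0, q_k - 1, 0, q_k - 1, …`.
Hence `altVal q a < altVal q e` forces the signed leading difference to be positive, and
then, the digits `< q_k ≤ q` being valid base-`q` digits, so is `negVal q a < negVal q e`.
-/

open Filter Topology

lemma hasSum_sub_succ_of_antitone {u : ℕ → ℝ} (hu : Antitone u) (h : Tendsto u atTop (𝓝 0)) :
    HasSum (fun i => u i - u (i + 1)) (u 0) := by
  rw [hasSum_iff_tendsto_nat_of_nonneg (fun i => sub_nonneg.2 (hu i.le_succ))]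
  simp_rw [Finset.sum_range_sub']
  simpa using h.const_sub (u 0)

lemma tsum_eq_add_tsum_of_eq_zero {f : ℕ → ℝ} (hf : Summable f) {n : ℕ}
    (h : ∀ k < n, f k = 0) : ∑' k, f k = f n + ∑' i, f (i + (n + 1)) := by
  rw [← hf.sum_add_tsum_nat_add (n + 1), Finset.sum_range_succ,
    Finset.sum_eq_zero fun k hk => h k (Finset.mem_range.1 hk), zero_add]

lemma cden_succ (q : ℕ → ℕ) (n : ℕ) : cden q (n + 1) = cden q n * q (n + 1) := by
  simp [cden, Finset.prod_range_succ]

lemma cden_const (b n : ℕ) : cden (fun _ => b) n = (b : ℝ) ^ (n + 1) := by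
  simp [cden]

section CantorSeries

variable {q : ℕ → ℕ}

lemma cden_pos (hq : ∀ k, 0 < q k) (n : ℕ) : 0 < cden q n :=
  Finset.prod_pos fun i _ => by exact_mod_cast hq i

lemma tendsto_cden_atTop (hq : ∀ k, 2 ≤ q k) : Tendsto (cden q) atTop atTop := by
  refine tendsto_atTop_mono (fun n => ?_) (tendsto_pow_atTop_atTop_of_one_lt one_lt_two)
  calc (2 : ℝ) ^ n ≤ ∏ _i ∈ Finset.range (n + 1), (2 : ℝ) := by
        simpa using pow_le_pow_right₀ one_le_two n.le_succ
    _ ≤ cden q n := Finset.prod_le_prod (by norm_num) fun i _ => by exact_mod_cast hq i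

lemma sub_one_div_cden_succ (hq : ∀ k, 0 < q k) (k : ℕ) :
    ((q (k + 1) : ℝ) - 1) / cden q (k + 1) = (cden q k)⁻¹ - (cden q (k + 1))⁻¹ := by
  have hc := cden_pos hq k
  have hqk : (0 : ℝ) < q (k + 1) := by exact_mod_cast hq (k + 1)
  rw [cden_succ]
  field_simp

lemma hasSum_maxDigits_tail (hq : ∀ k, 2 ≤ q k) (n : ℕ) :
    HasSum (fun i => ((q (i + (n + 1)) : ℝ) - 1) / cden q (i + (n + 1))) (cden q n)⁻¹ := by
  have hpos : ∀ k, 0 < q k := fun k => two_pos.trans_le (hq k)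
  have hanti : Antitone fun i => (cden q (n + i))⁻¹ := antitone_nat_of_succ_le fun i => by
    rw [← add_assoc, cden_succ]
    have : (1 : ℝ) ≤ q (n + i + 1) := by exact_mod_cast hpos _
    gcongr
    · exact cden_pos hpos _
    · exact le_mul_of_one_le_right (cden_pos hpos _).le this
  have htends : Tendsto (fun i => (cden q (n + i))⁻¹) atTop (𝓝 0) :=
    ((tendsto_cden_atTop hq).comp
      (tendsto_atTop_mono (Nat.le_add_left · n) tendsto_id)).inv_tendsto_atTop
  convert hasSum_sub_succ_of_antitone hanti htends using 2 with i
  · rw [show i + (n + 1) = n + i + 1 by omega, sub_one_div_cden_succ hpos]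
    rfl
  · rfl

lemma summable_div_cden (hq : ∀ k, 2 ≤ q k) {d : ℕ → ℝ} (hd : ∀ k, |d k| ≤ q k - 1) :
    Summable fun k => d k / cden q k := by
  have hpos : ∀ k, 0 < q k := fun k => two_pos.trans_le (hq k)
  have hmax : Summable fun k => ((q k : ℝ) - 1) / cden q k :=
    (summable_nat_add_iff 1).1 (hasSum_maxDigits_tail hq 0).summable
  refine .of_norm_bounded hmax fun k => ?_
  rw [Real.norm_eq_abs, abs_div, abs_of_pos (cden_pos hpos k)]
  exact div_le_div_of_nonneg_right (hd k) (cden_pos hpos k).le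

lemma neg_inv_cden_le_tsum_tail (hq : ∀ k, 2 ≤ q k) {d : ℕ → ℝ} (hd : ∀ k, |d k| ≤ q k - 1)
    (n : ℕ) : -(cden q n)⁻¹ ≤ ∑' i, d (i + (n + 1)) / cden q (i + (n + 1)) := by
  have hpos : ∀ k, 0 < q k := fun k => two_pos.trans_le (hq k)
  refine hasSum_le (fun i => ?_) (hasSum_maxDigits_tail hq n).neg
    ((summable_nat_add_iff (n + 1)).2 (summable_div_cden hq hd)).hasSum
  rw [← neg_div]
  exact div_le_div_of_nonneg_right (neg_le_of_abs_le (hd _)) (cden_pos hpos _).le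

lemma neg_inv_cden_lt_tsum_tail (hq : ∀ k, 2 ≤ q k) {d : ℕ → ℝ} (hd : ∀ k, |d k| ≤ q k - 1)
    {n k : ℕ} (hk : n < k) (hdk : -((q k : ℝ) - 1) < d k) :
    -(cden q n)⁻¹ < ∑' i, d (i + (n + 1)) / cden q (i + (n + 1)) := by
  have hpos : ∀ k, 0 < q k := fun k => two_pos.trans_le (hq k)
  obtain ⟨i, rfl⟩ := Nat.exists_eq_add_of_lt hk
  rw [show n + i + 1 = i + (n + 1) by omega] at hdk
  refine hasSum_lt (i := i) (fun j => ?_) ?_ (hasSum_maxDigits_tail hq n).neg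
    ((summable_nat_add_iff (n + 1)).2 (summable_div_cden hq hd)).hasSum
  · simp only [← neg_div]
    exact div_le_div_of_nonneg_right (neg_le_of_abs_le (hd _)) (cden_pos hpos _).le
  · simp only [← neg_div]
    exact div_lt_div_of_pos_right hdk (cden_pos hpos _)

end CantorSeries

section Digits

variable {q a e : ℕ → ℕ}

def signedDigitDiff (a e : ℕ → ℕ) (k : ℕ) : ℝ := (-1) ^ (k + 1) * ((e k : ℝ) - a k)

lemma signedDigitDiff_swap (a e : ℕ → ℕ) (k : ℕ) :
    signedDigitDiff e a k = -signedDigitDiff a e k := by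
  simp only [signedDigitDiff]
  ring

lemma abs_signedDigitDiff (a e : ℕ → ℕ) (k : ℕ) :
    |signedDigitDiff a e k| = |(e k : ℝ) - a k| := by
  simp [signedDigitDiff, abs_mul]

lemma abs_signedDigitDiff_le (ha : ∀ k, a k < q k) (he : ∀ k, e k < q k) (k : ℕ) :
    |signedDigitDiff a e k| ≤ q k - 1 := by
  have hak : (a k : ℝ) + 1 ≤ q k := by exact_mod_cast ha k
  have hek : (e k : ℝ) + 1 ≤ q k := by exact_mod_cast he k
  rw [abs_signedDigitDiff, abs_sub_le_iff]
  constructor <;> linarith [(a k).cast_nonneg (α := ℝ), (e k).cast_nonneg (α := ℝ)]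

lemma one_le_abs_signedDigitDiff {k : ℕ} (hne : a k ≠ e k) : 1 ≤ |signedDigitDiff a e k| := by
  rw [abs_signedDigitDiff]
  rcases hne.lt_or_gt with h | h
  · have : (a k : ℝ) + 1 ≤ e k := by exact_mod_cast h
    exact le_abs.2 (Or.inl (by linarith))
  · have : (e k : ℝ) + 1 ≤ a k := by exact_mod_cast h
    exact le_abs.2 (Or.inr (by linarith))

lemma digits_of_signedDigitDiff_eq {k : ℕ} (ha : ∀ k, a k < q k) (he : ∀ k, e k < q k)
    (h : signedDigitDiff a e k = -((q k : ℝ) - 1)) :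
    (k % 2 = 0 ∧ e k = q k - 1 ∧ a k = 0) ∨ (k % 2 = 1 ∧ a k = q k - 1 ∧ e k = 0) := by
  have hak := ha k
  have hek := he k
  rcases Nat.even_or_odd k with hk | hk
  · rw [signedDigitDiff, hk.add_one.neg_one_pow] at h
    have : (e k : ℝ) + 1 = a k + q k := by linarith
    have : e k + 1 = a k + q k := by exact_mod_cast this
    have := Nat.even_iff.1 hk
    omega
  · rw [signedDigitDiff, hk.add_one.neg_one_pow] at h
    have : (a k : ℝ) + 1 = e k + q k := by linarith
    have : a k + 1 = e k + q k := by exact_mod_cast this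
    have := Nat.odd_iff.1 hk
    omega

lemma excluded_or_excluded_of_signedDigitDiff_eq (ha : ∀ k, a k < q k) (he : ∀ k, e k < q k)
    {n : ℕ} (h : ∀ k, n < k → signedDigitDiff a e k = -((q k : ℝ) - 1)) :
    Excluded q a ∨ Excluded q e := by
  have digits := fun k hk => digits_of_signedDigitDiff_eq ha he (h k hk)
  rcases Nat.mod_two_eq_zero_or_one n with hn | hn
  · refine .inr ⟨n, fun j => ?_⟩
    have h₁ := digits (n + 2 * j + 1) (by omega)
    have h₂ := digits (n + 2 * j + 2) (by omega)
    omega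
  · refine .inl ⟨n, fun j => ?_⟩
    have h₁ := digits (n + 2 * j + 1) (by omega)
    have h₂ := digits (n + 2 * j + 2) (by omega)
    omega

lemma Excluded.of_const {b : ℕ} (h : Excluded (fun _ => b) e) (he : ∀ k, e k < q k)
    (hq : ∀ k, q k ≤ b) : Excluded q e := by
  obtain ⟨m, hm⟩ := h
  refine ⟨m, fun j => ⟨(hm j).1, ?_⟩⟩
  have : e (m + 2 * j + 2) = b - 1 := (hm j).2
  have := he (m + 2 * j + 2)
  have := hq (m + 2 * j + 2)
  omega

end Digits

lemma negVal_eq_altVal (b : ℕ) (e : ℕ → ℕ) : negVal b e = altVal (fun _ => b) e := by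
  refine tsum_congr fun k => ?_
  rw [cden_const, neg_pow]
  rcases neg_one_pow_eq_or ℝ (k + 1) with h | h <;> simp [h, neg_div, div_neg]

section Comparison

variable {q a e : ℕ → ℕ}

lemma altVal_sub_altVal (hq : ∀ k, 2 ≤ q k) (ha : ∀ k, a k < q k) (he : ∀ k, e k < q k) :
    altVal q e - altVal q a = ∑' k, signedDigitDiff a e k / cden q k := by
  have summable : ∀ x : ℕ → ℕ, (∀ k, x k < q k) →
      Summable fun k => (-1 : ℝ) ^ (k + 1) * x k / cden q k := fun x hx =>
    summable_div_cden hq fun k => by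
      simpa [abs_mul, le_sub_iff_add_le] using (show (x k : ℝ) + 1 ≤ q k by exact_mod_cast hx k)
  rw [altVal, altVal, ← (summable e he).tsum_sub (summable a ha)]
  refine tsum_congr fun k => ?_
  rw [signedDigitDiff]
  ring

lemma inv_cden_add_tail_le_altVal_sub (hq : ∀ k, 2 ≤ q k) (ha : ∀ k, a k < q k)
    (he : ∀ k, e k < q k) {n : ℕ} (hagree : ∀ k < n, a k = e k)
    (hlead : 1 ≤ signedDigitDiff a e n) :
    (cden q n)⁻¹ + ∑' i, signedDigitDiff a e (i + (n + 1)) / cden q (i + (n + 1))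
      ≤ altVal q e - altVal q a := by
  have hsplit := tsum_eq_add_tsum_of_eq_zero
    (summable_div_cden hq (abs_signedDigitDiff_le ha he)) (n := n) fun k hk => by
      rw [signedDigitDiff, hagree k hk, sub_self, mul_zero, zero_div]
  rw [altVal_sub_altVal hq ha he, hsplit, inv_eq_one_div]
  gcongr
  exact (cden_pos (fun k => two_pos.trans_le (hq k)) n).le

lemma altVal_le_altVal_of_lead (hq : ∀ k, 2 ≤ q k) (ha : ∀ k, a k < q k)
    (he : ∀ k, e k < q k) {n : ℕ} (hagree : ∀ k < n, a k = e k)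
    (hlead : 1 ≤ signedDigitDiff a e n) : altVal q a ≤ altVal q e := by
  have hhead := inv_cden_add_tail_le_altVal_sub hq ha he hagree hlead
  have htail := neg_inv_cden_le_tsum_tail hq (abs_signedDigitDiff_le ha he) n
  linarith

/-- The tail bound of `altVal_le_altVal_of_lead` is attained only by the extremal tail
`0, q_k - 1, 0, q_k - 1, …` of one of the two sequences. -/
lemma altVal_lt_altVal_of_lead (hq : ∀ k, 2 ≤ q k) (ha : ∀ k, a k < q k)
    (he : ∀ k, e k < q k) {n : ℕ} (hagree : ∀ k < n, a k = e k)
    (hlead : 1 ≤ signedDigitDiff a e n) (hca : ¬ Excluded q a) (hce : ¬ Excluded q e) :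
    altVal q a < altVal q e := by
  obtain ⟨k, hk, hdk⟩ : ∃ k, n < k ∧ -((q k : ℝ) - 1) < signedDigitDiff a e k := by
    by_contra! h
    have hext : ∀ k, n < k → signedDigitDiff a e k = -((q k : ℝ) - 1) := fun k hk =>
      (h k hk).antisymm (neg_le_of_abs_le (abs_signedDigitDiff_le ha he k))
    exact (excluded_or_excluded_of_signedDigitDiff_eq ha he hext).elim hca hce
  have hhead := inv_cden_add_tail_le_altVal_sub hq ha he hagree hlead
  have htail := neg_inv_cden_lt_tsum_tail hq (abs_signedDigitDiff_le ha he) hk hdk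
  linarith

lemma one_le_signedDigitDiff_of_altVal_lt (hq : ∀ k, 2 ≤ q k)
    (ha : ∀ k, a k < q k) (he : ∀ k, e k < q k) {n : ℕ} (hagree : ∀ k < n, a k = e k)
    (hne : a n ≠ e n) (hlt : altVal q a < altVal q e) : 1 ≤ signedDigitDiff a e n := by
  by_contra! h
  have habs := one_le_abs_signedDigitDiff hne
  have hswap : 1 ≤ signedDigitDiff e a n := by
    rw [signedDigitDiff_swap]
    linarith [le_abs'.1 habs |>.resolve_right (not_le.2 h)]
  exact hlt.not_ge (altVal_le_altVal_of_lead hq he ha (fun k hk => (hagree k hk).symm) hswap)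

end Comparison

/-- with bases `2 ≤ q_k ≤ q` and canonical digit sequences, the map
`f : Σ (−1)^k ε_k/(q_1⋯q_k) ↦ Σ ε_k/(−q)^k` is strictly increasing. -/
theorem stmt7 (q0 : ℕ) (q : ℕ → ℕ) (hq2 : ∀ k, 2 ≤ q k) (hqq : ∀ k, q k ≤ q0)
    (a e : ℕ → ℕ) (ha : ∀ k, a k < q k) (he : ∀ k, e k < q k)
    (hca : ¬ Excluded q a) (hce : ¬ Excluded q e)
    (hlt : altVal q a < altVal q e) :
    negVal q0 a < negVal q0 e := by
  obtain ⟨n, hagree, hne⟩ : ∃ n, (∀ k < n, a k = e k) ∧ a n ≠ e n := by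
    have hdiff : ∃ n, a n ≠ e n := by
      by_contra! h
      exact hlt.ne (congrArg (altVal q) (funext h))
    exact ⟨Nat.find hdiff, fun k hk => not_not.1 (Nat.find_min hdiff hk), Nat.find_spec hdiff⟩
  have hlead := one_le_signedDigitDiff_of_altVal_lt hq2 ha he hagree hne hlt
  rw [negVal_eq_altVal, negVal_eq_altVal]
  exact altVal_lt_altVal_of_lead (fun _ => (hq2 0).trans (hqq 0))
    (fun k => (ha k).trans_le (hqq k)) (fun k => (he k).trans_le (hqq k)) hagree hlead
    (fun h => hca (h.of_const ha hqq)) (fun h => hce (h.of_const he hqq))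
end

section
/- With f as above (f: Σ (−1)^k ε_k/(q_1⋯q_k) ↦ Σ ε_k/(−q)^k, with 2 ≤ q_k ≤ q), for every x with digit sequence (ε_k) and every n, f(σ^n(x)) = σ^n(f(x)), where on the left σ is the shift for the alternating Cantor expansion and on the right σ is the shift for the nega-q expansion (σ(Σ ε_k/(−q)^k) = Σ_{k≥2} ε_k/(−q)^{k−1}). -/
/-- `f(σⁿ(x)) = σⁿ(f(x))`. The left-hand side is the nega-q value of the
digit sequence shifted by `n`; the right-hand side is the nega-q shift
`σⁿ(y) = (−q)^n (y − Σ_{k≤n} ε_k/(−q)^k)` of `y = f(x) = Σ ε_k/(−q)^k`. -/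
theorem stmt8 (q0 : ℕ) (q : ℕ → ℕ) (hq2 : ∀ k, 2 ≤ q k) (hqq : ∀ k, q k ≤ q0)
    (e : ℕ → ℕ) (he : ∀ k, e k < q k) (n : ℕ) :
    negVal q0 (fun k => e (n + k))
      = (-(q0 : ℝ)) ^ n *
        (negVal q0 e - ∑ k ∈ Finset.range n, (e k : ℝ) / (-(q0 : ℝ)) ^ (k + 1)) := by
  have hq0 : (2 : ℕ) ≤ q0 := le_trans (hq2 0) (hqq 0)
  have hq0R : (2 : ℝ) ≤ (q0 : ℝ) := by exact_mod_cast hq0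
  have hq0pos : (0 : ℝ) < (q0 : ℝ) := by linarith
  have hne : (-(q0 : ℝ)) ≠ 0 := by
    simp only [neg_ne_zero]; exact ne_of_gt hq0pos
  have hsum : Summable (fun k => (e k : ℝ) / (-(q0 : ℝ)) ^ (k + 1)) := by
    have hg : Summable (fun k : ℕ => (q0 : ℝ) * ((q0 : ℝ)⁻¹) ^ (k + 1)) := by
      apply Summable.mul_left
      apply (summable_geometric_of_lt_one (by positivity)
        (by rw [inv_lt_one_iff₀]; right; linarith)).comp_injective
        (add_left_injective 1)
    refine Summable.of_norm (Summable.of_nonneg_of_le (fun k => norm_nonneg _) ?_ hg)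
    intro k
    have hek : (e k : ℝ) ≤ (q0 : ℝ) := by
      exact_mod_cast le_trans (le_of_lt (he k)) (hqq k)
    have h1 : ‖(e k : ℝ) / (-(q0 : ℝ)) ^ (k + 1)‖ = (e k : ℝ) / (q0 : ℝ) ^ (k + 1) := by
      rw [norm_div, norm_pow, norm_neg, Real.norm_natCast, Real.norm_natCast]
    rw [h1, div_eq_mul_inv, ← inv_pow]
    exact mul_le_mul_of_nonneg_right hek (by positivity)
  have key : ∑' k : ℕ, (e k : ℝ) / (-(q0 : ℝ)) ^ (k + 1)
      = (∑ k ∈ Finset.range n, (e k : ℝ) / (-(q0 : ℝ)) ^ (k + 1))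
        + ∑' k : ℕ, (e (k + n) : ℝ) / (-(q0 : ℝ)) ^ (k + n + 1) :=
    (Summable.sum_add_tsum_nat_add n hsum).symm
  unfold negVal
  rw [key]
  have T : ∑' k : ℕ, (e (k + n) : ℝ) / (-(q0 : ℝ)) ^ (k + n + 1)
      = (-(q0 : ℝ))⁻¹ ^ n * ∑' k : ℕ, (e (n + k) : ℝ) / (-(q0 : ℝ)) ^ (k + 1) := by
    rw [← tsum_mul_left]
    apply tsum_congr
    intro k
    rw [Nat.add_comm k n, show n + k + 1 = (k + 1) + n from by omega, pow_add, inv_pow]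
    rw [div_eq_mul_inv, mul_inv, div_eq_mul_inv]
    ring
  rw [T, add_sub_cancel_left, ← mul_assoc, ← mul_pow, mul_inv_cancel₀ hne, one_pow, one_mul]
end

section
/- Let (c_k) be digits with c_k ∈ {0,...,q_k−1} and suppose there exists n with q_n < q where 2 ≤ q_k ≤ q for all k. At the nega-Q-rational point x_0 represented by the two digit sequences ε_1...ε_m (q_{m+1}−1) 0 (q_{m+3}−1) 0 ... and ε_1...ε_{m−1}(ε_m−1) 0 (q_{m+2}−1) 0 (q_{m+4}−1)... with m < n, the jump of f equals 1/q^m − (1/q^m)·Σ_{k≥1}(q_{k+m}−1)/q^k, which is nonzero whenever some q_{k+m} < q. -/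
/-- Digit sequence `ε_1 … ε_m (q_{m+1}−1) 0 (q_{m+3}−1) 0 …` (0-indexed at `m`). -/
def dA (q e : ℕ → ℕ) (m : ℕ) : ℕ → ℕ := fun n =>
  if n ≤ m then e n else if (n - m) % 2 = 1 then q n - 1 else 0

/-- Digit sequence `ε_1 … ε_{m−1} (ε_m−1) 0 (q_{m+2}−1) 0 (q_{m+4}−1) …` (0-indexed at `m`). -/
def dB (q e : ℕ → ℕ) (m : ℕ) : ℕ → ℕ := fun n =>
  if n < m then e n
  else if n = m then e m - 1
  else if (n - m) % 2 = 1 then 0 else q n - 1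

section Series

variable {x : ℝ}

lemma summable_div_pow_succ_of_abs_le {C : ℝ} (hx : 1 < |x|) {c : ℕ → ℝ}
    (hc : ∀ k, |c k| ≤ C) : Summable fun k => c k / x ^ (k + 1) := by
  have hx0 : 0 < |x| := one_pos.trans hx
  have hgeo : Summable fun k : ℕ => C * |x|⁻¹ ^ (k + 1) :=
    ((summable_nat_add_iff 1).2 (summable_geometric_of_lt_one (by positivity)
      (inv_lt_one_of_one_lt₀ hx))).mul_left C
  refine Summable.of_norm_bounded hgeo fun k => ?_
  rw [Real.norm_eq_abs, abs_div, abs_pow, div_eq_mul_inv, ← inv_pow]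
  gcongr
  exact hc k

lemma tsum_sub_one_div_pow_succ (hx : 1 < x) : ∑' k : ℕ, (x - 1) / x ^ (k + 1) = 1 := by
  have hx0 : 0 < x := one_pos.trans hx
  have hterm : ∀ k : ℕ, (x - 1) / x ^ (k + 1) = (x - 1) / x * x⁻¹ ^ k := fun k => by
    rw [pow_succ, inv_pow]; field_simp
  rw [tsum_congr hterm, tsum_mul_left,
    tsum_geometric_of_lt_one (by positivity) (inv_lt_one_of_one_lt₀ hx)]
  field_simp [(sub_pos.2 hx).ne']

lemma tsum_div_pow_succ_lt_one (hx : 1 < x) {c : ℕ → ℝ} (hc0 : ∀ k, 0 ≤ c k)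
    (hc : ∀ k, c k ≤ x - 1) {i : ℕ} (hi : c i < x - 1) : ∑' k, c k / x ^ (k + 1) < 1 := by
  have hx0 : 0 < x := one_pos.trans hx
  have hmax : Summable fun k : ℕ => (x - 1) / x ^ (k + 1) :=
    summable_div_pow_succ_of_abs_le (C := x - 1) (by rwa [abs_of_pos hx0])
      fun _ => (abs_of_pos (sub_pos.2 hx)).le
  calc ∑' k, c k / x ^ (k + 1) < ∑' k : ℕ, (x - 1) / x ^ (k + 1) :=
        hmax.tsum_lt_tsum_of_nonneg (fun k => div_nonneg (hc0 k) (by positivity))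
          (fun k => by gcongr; exact hc k) (by gcongr)
    _ = 1 := tsum_sub_one_div_pow_succ hx

lemma tsum_eq_add_tsum_of_eq_zero_of_lt {f : ℕ → ℝ} (hf : Summable f) {m : ℕ}
    (h : ∀ k < m, f k = 0) : ∑' k, f k = f m + ∑' j, f (m + 1 + j) := by
  rw [← hf.sum_add_tsum_nat_add (m + 1), Finset.sum_range_succ,
    Finset.sum_eq_zero fun k hk => h k (Finset.mem_range.1 hk), zero_add]
  simp only [add_comm _ (m + 1)]

end Series

lemma summable_digits_div_neg_pow {q0 C : ℕ} (hq0 : 1 < q0) {a : ℕ → ℕ} (ha : ∀ k, a k ≤ C) :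
    Summable fun k => (a k : ℝ) / (-(q0 : ℝ)) ^ (k + 1) :=
  summable_div_pow_succ_of_abs_le (C := C) (by rw [abs_neg, Nat.abs_cast]; exact_mod_cast hq0)
    fun k => by rw [Nat.abs_cast]; exact_mod_cast ha k

lemma negVal_sub_negVal {q0 C : ℕ} (hq0 : 1 < q0) {a b : ℕ → ℕ} (ha : ∀ k, a k ≤ C)
    (hb : ∀ k, b k ≤ C) :
    negVal q0 a - negVal q0 b = ∑' k, ((a k : ℝ) - b k) / (-(q0 : ℝ)) ^ (k + 1) := by
  rw [negVal, negVal, ← (summable_digits_div_neg_pow hq0 ha).tsum_sub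
    (summable_digits_div_neg_pow hq0 hb)]
  simp only [sub_div]

section Expansions

variable {q e : ℕ → ℕ} {m : ℕ}

lemma dA_le (he : ∀ k, e k ≤ q k) (k : ℕ) : dA q e m k ≤ q k := by
  have := he k
  unfold dA
  split_ifs <;> omega

lemma dB_le (he : ∀ k, e k ≤ q k) (k : ℕ) : dB q e m k ≤ q k := by
  have := he k
  unfold dB
  split_ifs with _ hkm
  · omega
  · subst hkm; omega
  all_goals omega

lemma dA_sub_dB_of_lt {k : ℕ} (hk : k < m) : (dA q e m k : ℝ) - dB q e m k = 0 := by
  simp [dA, dB, hk, hk.le]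

lemma dA_sub_dB_self (hem : 1 ≤ e m) : (dA q e m m : ℝ) - dB q e m m = 1 := by
  simp [dA, dB, Nat.cast_sub hem]

lemma dA_sub_dB_add_one_add (j : ℕ) (hq : 1 ≤ q (m + 1 + j)) :
    (dA q e m (m + 1 + j) : ℝ) - dB q e m (m + 1 + j)
      = (-1) ^ j * ((q (m + 1 + j) : ℝ) - 1) := by
  have hsub : m + 1 + j - m = j + 1 := by omega
  simp only [dA, dB, hsub, if_neg (show ¬m + 1 + j ≤ m by omega),
    if_neg (show ¬m + 1 + j < m by omega), if_neg (show m + 1 + j ≠ m by omega)]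
  rcases Nat.even_or_odd j with hj | hj
  · have : (j + 1) % 2 = 1 := by rcases hj with ⟨r, rfl⟩; omega
    simp [this, hj.neg_one_pow, Nat.cast_sub hq]
  · have : (j + 1) % 2 = 0 := by rcases hj with ⟨r, rfl⟩; omega
    simp [this, hj.neg_one_pow, Nat.cast_sub hq]

lemma negVal_dA_sub_negVal_dB {q0 : ℕ} (hq0 : 1 < q0) (hq : ∀ k, 1 ≤ q k)
    (hqq : ∀ k, q k ≤ q0) (he : ∀ k, e k ≤ q k) (hem : 1 ≤ e m) :
    negVal q0 (dA q e m) - negVal q0 (dB q e m)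
      = (1 - ∑' k : ℕ, ((q (m + 1 + k) : ℝ) - 1) / (q0 : ℝ) ^ (k + 1))
          / (-(q0 : ℝ)) ^ (m + 1) := by
  set g : ℕ → ℝ := fun k => ((dA q e m k : ℝ) - dB q e m k) / (-(q0 : ℝ)) ^ (k + 1)
  have hA : ∀ k, dA q e m k ≤ q0 := fun k => (dA_le he k).trans (hqq k)
  have hB : ∀ k, dB q e m k ≤ q0 := fun k => (dB_le he k).trans (hqq k)
  have hg : Summable g := by
    simpa only [g, sub_div] using
      (summable_digits_div_neg_pow hq0 hA).sub (summable_digits_div_neg_pow hq0 hB)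
  have hhead : ∀ k < m, g k = 0 := fun k hk => by
    simp only [g, dA_sub_dB_of_lt hk, zero_div]
  have htail : ∀ j : ℕ, g (m + 1 + j)
      = -(((q (m + 1 + j) : ℝ) - 1) / (q0 : ℝ) ^ (j + 1)) / (-(q0 : ℝ)) ^ (m + 1) := fun j => by
    have hpow : (-(q0 : ℝ)) ^ (m + 1 + j + 1)
        = -((-1) ^ j * (-(q0 : ℝ)) ^ (m + 1) * (q0 : ℝ) ^ (j + 1)) := by
      rw [add_assoc (m + 1), pow_add, neg_pow (q0 : ℝ) (j + 1), pow_succ]; ring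
    simp only [g, dA_sub_dB_add_one_add j (hq _), hpow]
    field_simp
  rw [negVal_sub_negVal hq0 hA hB, tsum_eq_add_tsum_of_eq_zero_of_lt hg hhead, tsum_congr htail,
    tsum_div_const, tsum_neg]
  simp only [g, dA_sub_dB_self hem]
  ring

end Expansions

theorem stmt11_general (q0 : ℕ) (q : ℕ → ℕ) (hq2 : ∀ k, 2 ≤ q k) (hqq : ∀ k, q k ≤ q0)
    (e : ℕ → ℕ) (he : ∀ k, e k < q k) (m : ℕ) (hem : 1 ≤ e m) :
    |negVal q0 (dA q e m) - negVal q0 (dB q e m)|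
        = |1 / (q0 : ℝ) ^ (m + 1)
            - (1 / (q0 : ℝ) ^ (m + 1)) *
              ∑' k : ℕ, ((q (m + 1 + k) : ℝ) - 1) / (q0 : ℝ) ^ (k + 1)| ∧
      ((∃ k, q (m + 1 + k) < q0) → negVal q0 (dA q e m) ≠ negVal q0 (dB q e m)) := by
  have hq0 : 1 < q0 := (hq2 0).trans (hqq 0)
  have hjump := negVal_dA_sub_negVal_dB hq0 (fun k => one_le_two.trans (hq2 k)) hqq
    (fun k => (he k).le) hem
  set S := ∑' k : ℕ, ((q (m + 1 + k) : ℝ) - 1) / (q0 : ℝ) ^ (k + 1)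
  refine ⟨?_, fun ⟨i, hi⟩ => ?_⟩
  · rw [hjump, show 1 / (q0 : ℝ) ^ (m + 1) - 1 / (q0 : ℝ) ^ (m + 1) * S
      = (1 - S) / (q0 : ℝ) ^ (m + 1) by ring, abs_div, abs_div, abs_pow, abs_pow, abs_neg]
  · have hS : S < 1 := tsum_div_pow_succ_lt_one (by exact_mod_cast hq0)
      (fun k => sub_nonneg.2 (by exact_mod_cast one_le_two.trans (hq2 _)))
      (fun k => sub_le_sub_right (by exact_mod_cast hqq _) 1)
      (sub_lt_sub_right (by exact_mod_cast hi) 1)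
    rw [← sub_ne_zero, hjump]
    exact div_ne_zero (sub_ne_zero.2 hS.ne') (pow_ne_zero _ (neg_ne_zero.2 (by positivity)))

/-- at a nega-Q-rational point `x₀` with the two representations `dA` and `dB`,
the jump of `f` equals `1/q^m − (1/q^m)·Σ_{k≥1} (q_{k+m}−1)/q^k` (here `q^m` is `q0 ^ (m+1)`
since digits are 0-indexed), and it is nonzero whenever some `q_{k+m} < q`. -/
theorem stmt11 (q0 : ℕ) (q : ℕ → ℕ) (hq2 : ∀ k, 2 ≤ q k) (hqq : ∀ k, q k ≤ q0)
    (e : ℕ → ℕ) (he : ∀ k, e k < q k) (m : ℕ) (hem : 1 ≤ e m)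
    (hn : ∃ N, m < N ∧ q N < q0) :
    |negVal q0 (dA q e m) - negVal q0 (dB q e m)|
        = |1 / (q0 : ℝ) ^ (m + 1)
            - (1 / (q0 : ℝ) ^ (m + 1)) *
              ∑' k : ℕ, ((q (m + 1 + k) : ℝ) - 1) / (q0 : ℝ) ^ (k + 1)| ∧
      ((∃ k, q (m + 1 + k) < q0) → negVal q0 (dA q e m) ≠ negVal q0 (dB q e m)) :=
  stmt11_general q0 q hq2 hqq e he m hem
end

section
/- The function f (mapping Σ (−1)^k ε_k/(q_1⋯q_k) to Σ ε_k/(−q)^k, 2 ≤ q_k ≤ q) is the unique bounded function on [a_0−1, a_0] satisfying the infinite system of functional equations f(σ^{k−1}(x)) = −ε_k/q − (1/q) f(σ^k(x)) for all k ≥ 1 and all x = Σ (−1)^n ε_n/(q_1⋯q_n). -/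
/-!
Iterating the functional equation `n` times gives
`F x = Σ_{k<n} ε_k/(-q)^{k+1} + (-1/q)^n F(σ^n x)`. Since `|1/q| < 1` and `F` is bounded, the
remainder vanishes as `n → ∞`, so every bounded solution equals the series at `x`.
-/

/-- `σⁿ(x) = Σ_{k≥n+1} (−1)^{k−n} ε_k/(q_{n+1}⋯q_k)`, the `n`-th shift of the alternating
Cantor expansion with digits `e` (so `σ⁰(x) = x`). -/
noncomputable def sigv (q e : ℕ → ℕ) (n : ℕ) : ℝ :=
  ∑' j : ℕ, (-1 : ℝ) ^ (j + 1) * (e (n + j) : ℝ) / ∏ i ∈ Finset.range (j + 1), (q (n + i) : ℝ)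

open Filter Topology

section LinearRecurrence

variable {E : Type*} [NormedAddCommGroup E] [NormedSpace ℝ E] {r : ℝ} {y c : ℕ → E}

theorem eq_sum_range_add_pow_smul (hrec : ∀ n, y n = c n + r • y (n + 1)) (n : ℕ) :
    y 0 = ∑ k ∈ Finset.range n, r ^ k • c k + r ^ n • y n := by
  induction n with
  | zero => simp
  | succ n ih => rw [ih, hrec n, Finset.sum_range_succ, smul_add, smul_smul, ← pow_succ]; abel

theorem hasSum_pow_smul_of_bounded [CompleteSpace E] (hr : |r| < 1) {M : ℝ} (hM : ∀ n, ‖y n‖ ≤ M)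
    (hrec : ∀ n, y n = c n + r • y (n + 1)) :
    HasSum (fun n => r ^ n • c n) (y 0) := by
  -- `c` is bounded because `y` is: `c n = y n - r • y (n + 1)`.
  have hc : ∀ n, ‖r ^ n • c n‖ ≤ (1 + |r|) * M * |r| ^ n := fun n => by
    have hcn : ‖c n‖ ≤ (1 + |r|) * M := calc
      ‖c n‖ = ‖y n - r • y (n + 1)‖ := by rw [hrec n, add_sub_cancel_right]
      _ ≤ ‖y n‖ + |r| * ‖y (n + 1)‖ := by rw [← Real.norm_eq_abs, ← norm_smul]; exact norm_sub_le _ _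
      _ ≤ (1 + |r|) * M := by nlinarith [hM n, hM (n + 1), abs_nonneg r]
    rw [norm_smul, norm_pow, Real.norm_eq_abs, mul_comm]
    exact mul_le_mul hcn le_rfl (by positivity) ((norm_nonneg _).trans hcn)
  have hsum : Summable fun n => r ^ n • c n :=
    Summable.of_norm_bounded ((summable_geometric_of_lt_one (abs_nonneg r) hr).mul_left _) hc
  have htail : Tendsto (fun n => r ^ n • y n) atTop (𝓝 0) := by
    have hgeom := (tendsto_pow_atTop_nhds_zero_of_lt_one (abs_nonneg r) hr).mul_const M
    rw [zero_mul] at hgeom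
    refine squeeze_zero_norm (fun n => ?_) hgeom
    rw [norm_smul, norm_pow, Real.norm_eq_abs]
    exact mul_le_mul_of_nonneg_left (hM n) (by positivity)
  have hpartial := (tendsto_const_nhds (x := y 0)).sub htail
  rw [sub_zero] at hpartial
  refine hsum.hasSum_iff_tendsto_nat.mpr (hpartial.congr fun n => ?_)
  rw [eq_sum_range_add_pow_smul hrec n, add_sub_cancel_right]

end LinearRecurrence

theorem hasSum_div_neg_pow_of_bounded {a : ℝ} (ha : 1 < |a|) {y d : ℕ → ℝ} {M : ℝ}
    (hM : ∀ n, |y n| ≤ M) (hrec : ∀ n, y n = -d n / a - (1 / a) * y (n + 1)) :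
    HasSum (fun k => d k / (-a) ^ (k + 1)) (y 0) := by
  have hr : |-1 / a| < 1 := by
    rw [abs_div, abs_neg, abs_one, div_lt_one (by linarith)]; exact ha
  have h := hasSum_pow_smul_of_bounded hr hM (c := fun n => -d n / a) fun n => by
    rw [hrec n, smul_eq_mul]; ring
  refine h.congr_fun fun k => ?_
  have hinv : -1 / a = (-a)⁻¹ := by rw [inv_neg, neg_div, one_div]
  rw [smul_eq_mul, hinv, div_eq_mul_inv, ← inv_pow, pow_succ, inv_neg]
  ring

/-- `f : x = Σ (−1)^k ε_k/(q_1⋯q_k) ↦ Σ ε_k/(−q)^k` is the unique bounded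
solution of the system `F(σ^{k−1}(x)) = −ε_k/q − (1/q) F(σ^k(x))`, `k ≥ 1`: any two bounded
solutions agree at every point of the domain, where they take the value `Σ ε_k/(−q)^k`. -/
theorem stmt13 (q0 : ℕ) (q : ℕ → ℕ) (hq2 : ∀ k, 2 ≤ q k) (hqq : ∀ k, q k ≤ q0)
    (F G : ℝ → ℝ)
    (hFb : ∃ M, ∀ x, |F x| ≤ M) (hGb : ∃ M, ∀ x, |G x| ≤ M)
    (hF : ∀ e : ℕ → ℕ, (∀ k, e k < q k) → ∀ n : ℕ,
      F (sigv q e n) = -(e n : ℝ) / (q0 : ℝ) - (1 / (q0 : ℝ)) * F (sigv q e (n + 1)))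
    (hG : ∀ e : ℕ → ℕ, (∀ k, e k < q k) → ∀ n : ℕ,
      G (sigv q e n) = -(e n : ℝ) / (q0 : ℝ) - (1 / (q0 : ℝ)) * G (sigv q e (n + 1))) :
    ∀ e : ℕ → ℕ, (∀ k, e k < q k) →
      F (sigv q e 0) = (∑' k : ℕ, (e k : ℝ) / (-(q0 : ℝ)) ^ (k + 1)) ∧
        F (sigv q e 0) = G (sigv q e 0) := by
  intro e he
  have hq0 : 1 < |(q0 : ℝ)| := by
    rw [Nat.abs_cast, Nat.one_lt_cast]; exact (hq2 0).trans (hqq 0)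
  obtain ⟨M, hM⟩ := hFb
  obtain ⟨N, hN⟩ := hGb
  have hFsum := hasSum_div_neg_pow_of_bounded hq0 (fun n => hM (sigv q e n)) (hF e he)
  have hGsum := hasSum_div_neg_pow_of_bounded hq0 (fun n => hN (sigv q e n)) (hG e he)
  exact ⟨hFsum.tsum_eq.symm, hFsum.unique hGsum⟩
end

section
/- If there exist infinitely many indices n with q_n < q (and 2 ≤ q_k ≤ q for all k), then lim_{m→∞} (q_1 q_2 ⋯ q_m)/q^m = 0; consequently the derivative of f, whenever it exists at a point, equals 0 (f is singular). -/
set_option maxHeartbeats 1000000 in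
/-- if infinitely many `n` satisfy `q_n < q` (with `2 ≤ q_k ≤ q`), then
`(q_1 q_2 ⋯ q_m)/q^m → 0`; consequently the derivative of `f` — computed as the limit over
shrinking cylinders of `μ_f(Δ)/|Δ| = (q_1⋯q_m/q^m)·Σ_{k≥1}(q_{m+k}−1)/q^k` — equals `0`
whenever it exists. -/
theorem stmt17 (q0 : ℕ) (q : ℕ → ℕ) (hq2 : ∀ k, 2 ≤ q k) (hqq : ∀ k, q k ≤ q0)
    (hinf : ∀ N, ∃ n, N ≤ n ∧ q n < q0) :
    Filter.Tendsto (fun m => (∏ i ∈ Finset.range m, (q i : ℝ)) / (q0 : ℝ) ^ m)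
        Filter.atTop (nhds 0) ∧
      ∀ L : ℝ,
        Filter.Tendsto
          (fun m => ((∏ i ∈ Finset.range m, (q i : ℝ)) / (q0 : ℝ) ^ m) *
            ∑' k : ℕ, ((q (m + k) : ℝ) - 1) / (q0 : ℝ) ^ (k + 1))
          Filter.atTop (nhds L) → L = 0 := by
  have hq0 : (2:ℝ) ≤ (q0:ℝ) := by exact_mod_cast le_trans (hq2 0) (hqq 0)
  have hq0pos : (0:ℝ) < (q0:ℝ) := by linarith
  set a : ℕ → ℝ := fun m => (∏ i ∈ Finset.range m, (q i : ℝ)) / (q0:ℝ)^m with ha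
  have hpos : ∀ m, 0 ≤ a m := fun m =>
    div_nonneg (Finset.prod_nonneg fun i _ => by positivity) (by positivity)
  have hsucc : ∀ m, a (m+1) = a m * ((q m : ℝ) / (q0:ℝ)) := by
    intro m
    simp only [ha, Finset.prod_range_succ, pow_succ]
    field_simp
  have hle : ∀ m, a (m+1) ≤ a m := by
    intro m
    rw [hsucc]
    have h1 : (q m : ℝ)/(q0:ℝ) ≤ 1 := by
      rw [div_le_one hq0pos]; exact_mod_cast hqq m
    nlinarith [hpos m]
  have hanti : Antitone a := antitone_nat_of_succ_le hle
  have hbdd : BddBelow (Set.range a) := ⟨0, by rintro x ⟨m, rfl⟩; exact hpos m⟩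
  set ℓ := ⨅ m, a m with hℓdef
  have hlim : Filter.Tendsto a Filter.atTop (nhds ℓ) := tendsto_atTop_ciInf hanti hbdd
  have hl0 : 0 ≤ ℓ := le_ciInf hpos
  obtain ⟨φ, hφmono, hφ⟩ := Filter.extraction_of_frequently_atTop
    (Filter.frequently_atTop.2 (by intro N; obtain ⟨n, hn1, hn2⟩ := hinf N; exact ⟨n, hn1, hn2⟩))
  set c : ℝ := ((q0:ℝ)-1)/(q0:ℝ) with hc
  have hstep : ∀ k, a (φ k + 1) ≤ c * a (φ k) := by
    intro k
    rw [hsucc, mul_comm c]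
    have h1 : (q (φ k) : ℝ) ≤ (q0:ℝ) - 1 := by
      have := hφ k
      have : (q (φ k) : ℝ) + 1 ≤ (q0:ℝ) := by exact_mod_cast this
      linarith
    have h2 : (q (φ k):ℝ)/(q0:ℝ) ≤ c := by rw [hc]; gcongr
    exact mul_le_mul_of_nonneg_left h2 (hpos (φ k))
  have h1 : Filter.Tendsto (fun k => a (φ k)) Filter.atTop (nhds ℓ) :=
    hlim.comp hφmono.tendsto_atTop
  have h2 : Filter.Tendsto (fun k => a (φ k + 1)) Filter.atTop (nhds ℓ) :=
    hlim.comp (Filter.tendsto_atTop_mono (fun k => Nat.le_succ (φ k)) hφmono.tendsto_atTop)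
  have h3 : Filter.Tendsto (fun k => c * a (φ k)) Filter.atTop (nhds (c * ℓ)) :=
    h1.const_mul c
  have hle2 : ℓ ≤ c * ℓ := le_of_tendsto_of_tendsto' h2 h3 hstep
  have hclt : c < 1 := by rw [hc, div_lt_one hq0pos]; linarith
  have hceq : ℓ = 0 := by nlinarith
  have hmain : Filter.Tendsto a Filter.atTop (nhds 0) := hceq ▸ hlim
  refine ⟨hmain, ?_⟩
  intro L hL
  set r : ℝ := 1 / (q0:ℝ) with hr
  have hr0 : 0 ≤ r := by positivity
  have hr1 : r < 1 := by rw [hr, div_lt_one hq0pos]; linarith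
  have hgeo : Summable (fun k : ℕ => r ^ k) := summable_geometric_of_lt_one hr0 hr1
  have hterm : ∀ m k, ((q (m + k) : ℝ) - 1) / (q0:ℝ) ^ (k+1) ≤ r ^ k := by
    intro m k
    have hkey : (q0:ℝ) / (q0:ℝ) ^ (k+1) = r ^ k := by
      rw [hr, one_div, inv_pow, div_eq_iff (by positivity), pow_succ]
      field_simp
    rw [← hkey]
    gcongr
    · have := hqq (m+k); push_cast; linarith [(by exact_mod_cast this : (q (m+k):ℝ) ≤ (q0:ℝ))]
  have htermnn : ∀ m k, 0 ≤ ((q (m + k) : ℝ) - 1) / (q0:ℝ) ^ (k+1) := by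
    intro m k
    have : (2:ℝ) ≤ (q (m+k):ℝ) := by exact_mod_cast hq2 (m+k)
    exact div_nonneg (by linarith) (by positivity)
  have hsumm : ∀ m, Summable (fun k : ℕ => ((q (m + k) : ℝ) - 1) / (q0:ℝ) ^ (k+1)) := fun m =>
    Summable.of_nonneg_of_le (htermnn m) (hterm m) hgeo
  have htsum_le : ∀ m, (∑' k : ℕ, ((q (m + k) : ℝ) - 1) / (q0:ℝ) ^ (k+1)) ≤ 2 := by
    intro m
    have h1 : (∑' k : ℕ, ((q (m + k) : ℝ) - 1) / (q0:ℝ) ^ (k+1)) ≤ ∑' k : ℕ, r ^ k :=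
      Summable.tsum_le_tsum (hterm m) (hsumm m) hgeo
    have h2 : (∑' k : ℕ, r ^ k) = (1 - r)⁻¹ := tsum_geometric_of_lt_one hr0 hr1
    have h3 : (1:ℝ)/2 ≤ 1 - r := by
      have : r ≤ 1/2 := by rw [hr]; rw [div_le_div_iff₀ hq0pos (by norm_num)]; linarith
      linarith
    have h4 : (1 - r)⁻¹ ≤ 2 := by
      rw [inv_le_comm₀ (by linarith) (by norm_num)]
      linarith
    linarith
  have hzero : Filter.Tendsto
      (fun m => a m * ∑' k : ℕ, ((q (m + k) : ℝ) - 1) / (q0 : ℝ) ^ (k + 1))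
      Filter.atTop (nhds 0) := by
    apply squeeze_zero (fun m => mul_nonneg (hpos m) (tsum_nonneg (htermnn m)))
      (g := fun m => 2 * a m)
    · intro m
      calc a m * ∑' k : ℕ, ((q (m + k) : ℝ) - 1) / (q0 : ℝ) ^ (k + 1)
          ≤ a m * 2 := mul_le_mul_of_nonneg_left (htsum_le m) (hpos m)
        _ = 2 * a m := mul_comm _ _
    · have := hmain.const_mul (2:ℝ)
      simpa using this
  exact tendsto_nhds_unique hL hzero
end

section
/- Let q > 3 be an integer and u ∈ {0,...,q−1} fixed. The map h sending x, whose nega-q expansion is the concatenation over n ≥ 1 of the digit blocks (u repeated α_n−1 times followed by α_n), where α_n ∈ {1,...,q−1}\{u}, to y = Σ_{n≥1} α_n/(−q)^n, is injective on its domain. -/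
theorem digits_eq (q : ℕ) (hq : 3 < q) (α β : ℕ → ℕ)
    (hα : ∀ n, 1 ≤ α n ∧ α n ≤ q - 1)
    (hβ : ∀ n, 1 ≤ β n ∧ β n ≤ q - 1)
    (hy : (∑' n : ℕ, (α n : ℝ) / (-(q : ℝ)) ^ (n + 1))
        = ∑' n : ℕ, (β n : ℝ) / (-(q : ℝ)) ^ (n + 1)) : α = β := by
  have hq1 : (1:ℝ) < q := by exact_mod_cast Nat.lt_of_lt_of_le (by norm_num) hq.le
  have hq0 : (0:ℝ) < q := by linarith
  have hqne : (q:ℝ) ≠ 0 := ne_of_gt hq0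
  have hr : (0:ℝ) ≤ 1/(q:ℝ) := by positivity
  have hr1 : (1:ℝ)/(q:ℝ) < 1 := by rw [div_lt_one hq0]; linarith
  have hgeo : Summable (fun k : ℕ => ((1:ℝ)/(q:ℝ))^(k+1)) :=
    ((summable_geometric_of_lt_one hr hr1).comp_injective (add_left_injective 1))
  have hpowabs : ∀ k : ℕ, |(-(q:ℝ)) ^ (k+1)| = (q:ℝ)^(k+1) := by
    intro k; rw [abs_pow, abs_neg, abs_of_pos hq0]
  have hkey : ∀ (c : ℝ) (g : ℕ → ℝ), (∀ k, |g k| ≤ c) →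
      Summable (fun k => g k / (-(q:ℝ))^(k+1)) := by
    intro c g hg
    apply Summable.of_norm_bounded (g := fun k => c * ((1:ℝ)/(q:ℝ))^(k+1)) (hgeo.mul_left c)
    intro k
    simp only [Real.norm_eq_abs, abs_div, hpowabs k]
    rw [div_le_iff₀ (by positivity)]
    calc |g k| ≤ c := hg k
      _ = c * ((1:ℝ)/(q:ℝ))^(k+1) * (q:ℝ)^(k+1) := by
          rw [div_pow, one_pow]; field_simp
  have hcast : ∀ (g : ℕ → ℕ), (∀ n, 1 ≤ g n ∧ g n ≤ q - 1) →
      ∀ k, (1:ℝ) ≤ (g k : ℝ) ∧ (g k : ℝ) ≤ (q:ℝ) - 1 := by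
    intro g hg k
    refine ⟨by exact_mod_cast (hg k).1, ?_⟩
    have h2 : (g k : ℝ) ≤ ((q-1 : ℕ) : ℝ) := by exact_mod_cast (hg k).2
    rw [Nat.cast_sub (by omega)] at h2
    push_cast at h2 ⊢
    linarith
  set f : ℕ → ℝ := fun k => ((α k : ℝ) - β k) / (-(q:ℝ)) ^ (k+1) with hf
  have habs : ∀ k, |(α k : ℝ) - (β k : ℝ)| ≤ (q:ℝ) - 2 := by
    intro k
    obtain ⟨a1, a2⟩ := hcast α hα k
    obtain ⟨b1, b2⟩ := hcast β hβ k
    rw [abs_le]; constructor <;> linarith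
  have hsum : Summable f := hkey _ _ habs
  have hsα : Summable (fun n : ℕ => (α n : ℝ) / (-(q : ℝ)) ^ (n + 1)) := by
    apply hkey ((q:ℝ) - 1)
    intro k
    obtain ⟨a1, a2⟩ := hcast α hα k
    rw [abs_le]; constructor <;> linarith
  have hsβ : Summable (fun n : ℕ => (β n : ℝ) / (-(q : ℝ)) ^ (n + 1)) := by
    apply hkey ((q:ℝ) - 1)
    intro k
    obtain ⟨b1, b2⟩ := hcast β hβ k
    rw [abs_le]; constructor <;> linarith
  have hf0 : ∑' k, f k = 0 := by
    have h1 : ∑' k, f k = (∑' n : ℕ, (α n : ℝ) / (-(q : ℝ)) ^ (n + 1))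
        - ∑' n : ℕ, (β n : ℝ) / (-(q : ℝ)) ^ (n + 1) := by
      rw [← Summable.tsum_sub hsα hsβ]
      exact tsum_congr fun k => by simp [hf, sub_div]
    rw [h1, hy, sub_self]
  funext n
  induction n using Nat.strong_induction_on with
  | _ n ih =>
    by_contra hne
    have hzero : ∀ k ∈ Finset.range n, f k = 0 := by
      intro k hk
      simp only [hf]
      rw [ih k (Finset.mem_range.mp hk)]
      ring
    have hsplit := Summable.sum_add_tsum_nat_add (n+1) hsum
    rw [hf0, Finset.sum_range_succ, Finset.sum_eq_zero hzero, zero_add] at hsplit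
    have hbb : ∀ i : ℕ, |f (i + (n+1))| ≤ ((q:ℝ) - 2) * ((1:ℝ)/(q:ℝ))^(n+2) * ((1:ℝ)/(q:ℝ))^i := by
      intro i
      simp only [hf, abs_div, hpowabs]
      rw [div_le_iff₀ (by positivity)]
      have heq : ((q:ℝ) - 2) * ((1:ℝ)/(q:ℝ))^(n+2) * ((1:ℝ)/(q:ℝ))^i * (q:ℝ)^(i+(n+1)+1)
          = (q:ℝ) - 2 := by
        have h1 : ((q:ℝ)^(n+2)) ≠ 0 := by positivity
        have h2 : ((q:ℝ)^i) ≠ 0 := by positivity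
        rw [div_pow, div_pow, one_pow, one_pow, one_div, one_div,
          show i+(n+1)+1 = (n+2)+i from by ring, pow_add (q:ℝ) (n+2) i]
        calc ((q:ℝ)-2) * ((q:ℝ)^(n+2))⁻¹ * ((q:ℝ)^i)⁻¹ * ((q:ℝ)^(n+2)*(q:ℝ)^i)
            = ((q:ℝ)-2) * (((q:ℝ)^(n+2))⁻¹*(q:ℝ)^(n+2)) * (((q:ℝ)^i)⁻¹*(q:ℝ)^i) := by ring
          _ = (q:ℝ)-2 := by
              rw [inv_mul_cancel₀ h1, inv_mul_cancel₀ h2, mul_one, mul_one]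
      rw [heq]
      exact habs _
    have hsbb : Summable (fun i : ℕ => ((q:ℝ) - 2) * ((1:ℝ)/(q:ℝ))^(n+2) * ((1:ℝ)/(q:ℝ))^i) :=
      (summable_geometric_of_lt_one hr hr1).mul_left _
    have hsabs : Summable (fun i : ℕ => |f (i + (n+1))|) :=
      hsbb.of_nonneg_of_le (fun i => abs_nonneg _) hbb
    have htail : |∑' i : ℕ, f (i + (n+1))|
        ≤ ((q:ℝ) - 2) * ((1:ℝ)/(q:ℝ))^(n+2) * (1 - 1/(q:ℝ))⁻¹ := by
      calc |∑' i : ℕ, f (i + (n+1))| ≤ ∑' i : ℕ, |f (i + (n+1))| := by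
            rw [← Real.norm_eq_abs]
            exact (norm_tsum_le_tsum_norm (by simpa [Real.norm_eq_abs] using hsabs))
        _ ≤ ∑' i : ℕ, (((q:ℝ) - 2) * ((1:ℝ)/(q:ℝ))^(n+2) * ((1:ℝ)/(q:ℝ))^i) :=
            Summable.tsum_le_tsum hbb hsabs hsbb
        _ = ((q:ℝ) - 2) * ((1:ℝ)/(q:ℝ))^(n+2) * (1 - 1/(q:ℝ))⁻¹ := by
            rw [tsum_mul_left, tsum_geometric_of_lt_one hr hr1]
    have h1 : (1:ℝ) ≤ |(α n : ℝ) - β n| := by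
      have hz : ((α n : ℤ) - β n) ≠ 0 := sub_ne_zero.mpr (by exact_mod_cast hne)
      have := Int.one_le_abs hz
      have h2 : (1:ℝ) ≤ |(((α n : ℤ) - β n : ℤ) : ℝ)| := by
        rw [← Int.cast_abs]; exact_mod_cast this
      push_cast at h2
      exact h2
    have hfn : (1:ℝ)/(q:ℝ)^(n+1) ≤ |f n| := by
      simp only [hf, abs_div, hpowabs]
      gcongr
    have hfn2 : |f n| = |∑' i : ℕ, f (i + (n+1))| := by
      have : f n = -∑' i : ℕ, f (i + (n+1)) := by linarith [hsplit]
      rw [this, abs_neg]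
    rw [hfn2] at hfn
    have hcontr := hfn.trans htail
    have hq2 : (0:ℝ) < (q:ℝ) - 1 := by linarith
    rw [div_le_iff₀ (by positivity)] at hcontr
    have hrecip : (1 - 1/(q:ℝ))⁻¹ = (q:ℝ)/((q:ℝ)-1) := by
      rw [show (1 - 1/(q:ℝ)) = ((q:ℝ)-1)/(q:ℝ) from by field_simp, inv_div]
    rw [hrecip] at hcontr
    have h1' : ((q:ℝ)^(n+1)) ≠ 0 := by positivity
    have hval : ((q:ℝ)-2)*((1:ℝ)/(q:ℝ))^(n+2)*((q:ℝ)/((q:ℝ)-1))*(q:ℝ)^(n+1)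
        = ((q:ℝ)-2)/((q:ℝ)-1) := by
      rw [div_pow, one_pow, one_div, pow_succ, div_eq_mul_inv, div_eq_mul_inv,
        mul_inv]
      calc ((q:ℝ)-2) * (((q:ℝ)^(n+1))⁻¹ * (q:ℝ)⁻¹) * ((q:ℝ) * ((q:ℝ)-1)⁻¹) * (q:ℝ)^(n+1)
          = ((q:ℝ)-2) * ((q:ℝ)-1)⁻¹ * (((q:ℝ)^(n+1))⁻¹ * (q:ℝ)^(n+1)) * ((q:ℝ)⁻¹ * (q:ℝ)) := by
            ring
        _ = ((q:ℝ)-2) * ((q:ℝ)-1)⁻¹ := by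
            rw [inv_mul_cancel₀ h1', inv_mul_cancel₀ hqne, mul_one, mul_one]
    rw [hval] at hcontr
    rw [le_div_iff₀ hq2] at hcontr
    linarith

/-- for `q > 3` and fixed `u ∈ {0,…,q−1}`, the map `h` sending
`x = −u/(q+1) + Σ_{n≥1} (α_n − u)/(−q)^{α_1+⋯+α_n}` (the nega-q number whose expansion
consists of blocks of `α_n − 1` copies of `u` followed by `α_n`, with
`α_n ∈ {1,…,q−1} \ {u}`) to `y = Σ_{n≥1} α_n/(−q)^n` is injective on its domain: equal
values `y` force equal values `x`. -/
theorem stmt18 (q u : ℕ) (hq : 3 < q) (hu : u < q)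
    (α β : ℕ → ℕ)
    (hα : ∀ n, 1 ≤ α n ∧ α n ≤ q - 1 ∧ α n ≠ u)
    (hβ : ∀ n, 1 ≤ β n ∧ β n ≤ q - 1 ∧ β n ≠ u)
    (hy : (∑' n : ℕ, (α n : ℝ) / (-(q : ℝ)) ^ (n + 1))
        = ∑' n : ℕ, (β n : ℝ) / (-(q : ℝ)) ^ (n + 1)) :
    (-(u : ℝ) / (q + 1)
        + ∑' n : ℕ, ((α n : ℝ) - u) / (-(q : ℝ)) ^ (∑ i ∈ Finset.range (n + 1), α i))
      = -(u : ℝ) / (q + 1)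
        + ∑' n : ℕ, ((β n : ℝ) - u) / (-(q : ℝ)) ^ (∑ i ∈ Finset.range (n + 1), β i) := by
  have : α = β := digits_eq q hq α β (fun n => ⟨(hα n).1, (hα n).2.1⟩)
    (fun n => ⟨(hβ n).1, (hβ n).2.1⟩) hy
  rw [this]
end
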